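/- arXiv:1610.08444 — 6 statements merged into one kernel-verified Lean document; each statement's English description precedes it below -/
import Mathlib

section
/- Let k be a non-archimedean local field of characteristic p > 0 with residue field of cardinality q, with absolute value |·| taking values in {0} ∪ q^ℤ, and let k^m carry the max-norm ‖·‖. Let g(x) = Σ_α c_α x^α be a power series in m variables over k with A := Σ_α |c_α| < ∞ (so g converges absolutely on B(q) = {x ∈ k^m : ‖x‖ ≤ q}). Let D be the set of x ∈ k^m with ‖x‖ ≤ 1 such that ∂^β g(x) = 0 for every multi-index β with |β| ≤ p − 1. Then |g(x+h) − g(x)| ≤ A·‖h‖^p for all x ∈ D and all h ∈ k^m with ‖h‖ ≤ 1. -/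
/-!
Over a complete non-archimedean field, a power series `g = Σ c_α x^α` with `c_α → 0` converges
on the closed unit polydisc and may be rearranged freely, so expanding `(x + h)^α` binomially gives
Taylor's formula `g (x + h) = Σ_β h^β (D^β g)(x)` with the Hasse derivatives `D^β g`, whose
coefficients are those of `g` times binomial coefficients of norm `≤ 1`. Each term therefore has
norm `≤ A ‖h‖^|β|`, and by the ultrametric inequality the sum is bounded by its largest term.
The ordinary derivative is `∂^β g = β! D^β g`; when `|β| < p` the integer `β!` is invertible in
characteristic `p`, so the hypothesis kills every term with `|β| < p`, leaving `A ‖h‖^p`.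
-/

open scoped BigOperators

/-- The partial derivative of `g : k^m → k` in the `i`-th coordinate direction. -/
noncomputable def pdir {k : Type*} [NontriviallyNormedField k] {m : ℕ}
    (i : Fin m) (g : (Fin m → k) → k) : (Fin m → k) → k :=
  fun x => fderiv k g x (Pi.single i 1)

/-- The iterated partial derivative `∂^β g` associated to the multi-index `β`. -/
noncomputable def pmulti {k : Type*} [NontriviallyNormedField k] {m : ℕ}
    (β : Fin m → ℕ) (g : (Fin m → k) → k) : (Fin m → k) → k :=
  (List.finRange m).foldr (fun i h => (pdir i)^[β i] h) g

open Filter Topology Finset.HasAntidiagonal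

theorem Finsupp.prod_add_pow_eq_sum_antidiagonal {ι R : Type*} [Fintype ι] [DecidableEq ι]
    [CommSemiring R] (α : ι →₀ ℕ) (h x : ι → R) :
    ∏ i, (h i + x i) ^ α i =
      ∑ q ∈ antidiagonal α, ∏ i, ((α i).choose (q.1 i) : R) * (h i ^ q.1 i * x i ^ q.2 i) := by
  simp_rw [fun i => (Commute.all (h i) (x i)).add_pow' (α i), nsmul_eq_mul, Finset.prod_univ_sum]
  refine Finset.sum_nbij' (fun p => (Finsupp.equivFunOnFinite.symm fun i => (p i).1,
      Finsupp.equivFunOnFinite.symm fun i => (p i).2)) (fun q i => (q.1 i, q.2 i))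
    (fun p hp => ?_) (fun q hq => ?_) (fun p _ => rfl) (fun q _ => by simp) (fun p _ => rfl)
  · rw [Fintype.mem_piFinset] at hp
    rw [mem_antidiagonal]
    ext i
    simpa using hp i
  · rw [mem_antidiagonal] at hq
    simp [Fintype.mem_piFinset, ← hq]

theorem HasSum.sum_antidiagonal {G A : Type*} [AddCommMonoid G] [TopologicalSpace G]
    [ContinuousAdd G] [RegularSpace G] [AddMonoid A] [Finset.HasAntidiagonal A] {f : A × A → G}
    {a : G} (hf : HasSum f a) : HasSum (fun n => ∑ q ∈ antidiagonal n, f q) a :=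
  (sigmaAntidiagonalEquivProd.hasSum_iff.2 hf).sigma fun n => (antidiagonal n).hasSum f

theorem Finsupp.two_le_degree {ι : Type*} {β : ι →₀ ℕ} (h0 : β ≠ 0)
    (h1 : ∀ i, β ≠ Finsupp.single i 1) : 2 ≤ β.degree := by
  by_contra! hβ
  interval_cases hd : β.degree
  · exact h0 ((Finsupp.degree_eq_zero_iff β).1 hd)
  · obtain ⟨i, hi⟩ : β ∈ Set.range fun i => Finsupp.single i 1 := by
      rw [Finsupp.range_single_one]
      exact hd
    exact h1 i hi.symm

theorem natCast_prod_factorial_ne_zero {R ι : Type*} [AddMonoidWithOne R] [Fintype ι] {p : ℕ}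
    [CharP R p] (hp : p.Prime) {β : ι →₀ ℕ} (hβ : β.degree < p) :
    ((∏ i, (β i).factorial : ℕ) : R) ≠ 0 := by
  rw [Ne, CharP.cast_eq_zero_iff R p, Prime.dvd_finsetProd_iff hp.prime]
  rintro ⟨i, -, hi⟩
  exact ((Finsupp.le_degree i β).trans_lt hβ).not_ge (hp.dvd_factorial.1 hi)

namespace MvSeries

section Coefficients

variable {k : Type*} [NormedField k] {ι : Type*} [Fintype ι]

noncomputable def eval (c : (ι →₀ ℕ) → k) (x : ι → k) : k :=
  ∑' α, c α * ∏ i, x i ^ α i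

/-- Coefficients of the Hasse derivative `D^β = ∂^β / β!` of the series. -/
noncomputable def hasseCoeff (β : ι →₀ ℕ) (c : (ι →₀ ℕ) → k) (γ : ι →₀ ℕ) : k :=
  ((∏ i, ((β + γ) i).choose (β i) : ℕ) : k) * c (β + γ)

noncomputable def derivCoeff (β : ι →₀ ℕ) (c : (ι →₀ ℕ) → k) (γ : ι →₀ ℕ) : k :=
  ((∏ i, ((β + γ) i).descFactorial (β i) : ℕ) : k) * c (β + γ)

@[simp]
theorem hasseCoeff_zero (c : (ι →₀ ℕ) → k) : hasseCoeff 0 c = c := by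
  ext γ
  simp [hasseCoeff]

@[simp]
theorem derivCoeff_zero (c : (ι →₀ ℕ) → k) : derivCoeff 0 c = c := by
  ext γ
  simp [derivCoeff]

theorem hasseCoeff_single_one_derivCoeff [DecidableEq ι] (i : ι) (β : ι →₀ ℕ)
    (c : (ι →₀ ℕ) → k) :
    hasseCoeff (Finsupp.single i 1) (derivCoeff β c) = derivCoeff (β + Finsupp.single i 1) c := by
  ext γ
  rw [hasseCoeff, derivCoeff, derivCoeff, ← mul_assoc, ← Nat.cast_mul, ← Finset.prod_mul_distrib,
    ← add_assoc]
  congr 2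
  refine Finset.prod_congr rfl fun j _ => ?_
  simp only [Finsupp.add_apply, Finsupp.single_apply]
  split_ifs with hij
  · subst hij
    rw [Nat.choose_one_right, Nat.descFactorial_succ]
    congr 1
    omega
  · simp

theorem eval_derivCoeff (β : ι →₀ ℕ) (c : (ι →₀ ℕ) → k) (x : ι → k) :
    eval (derivCoeff β c) x = ((∏ i, (β i).factorial : ℕ) : k) * eval (hasseCoeff β c) x := by
  simp only [eval, derivCoeff, hasseCoeff, Nat.descFactorial_eq_factorial_mul_choose,
    Finset.prod_mul_distrib, Nat.cast_mul, mul_assoc, tsum_mul_left]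

theorem norm_prod_pow_le (h : ι → k) (β : ι →₀ ℕ) : ‖∏ i, h i ^ β i‖ ≤ ‖h‖ ^ β.degree := by
  rw [norm_prod, Finsupp.degree_eq_sum, ← Finset.prod_pow_eq_pow_sum]
  exact Finset.prod_le_prod (fun i _ => norm_nonneg _) fun i _ =>
    (norm_pow _ _).trans_le (pow_le_pow_left₀ (norm_nonneg _) (norm_le_pi_norm h i) _)

theorem norm_prod_pow_le_one {x : ι → k} (hx : ‖x‖ ≤ 1) (α : ι →₀ ℕ) : ‖∏ i, x i ^ α i‖ ≤ 1 :=
  (norm_prod_pow_le x α).trans (pow_le_one₀ (norm_nonneg _) hx)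

end Coefficients

section Ultrametric

variable {k : Type*} [NormedField k] [IsUltrametricDist k] {ι : Type*} [Fintype ι]
  {c : (ι →₀ ℕ) → k}

theorem norm_natCast_mul_le (n : ℕ) (a : k) : ‖(n : k) * a‖ ≤ ‖a‖ := by
  rw [norm_mul]
  exact mul_le_of_le_one_left (norm_nonneg _) (IsUltrametricDist.norm_natCast_le_one k n)

theorem norm_hasseCoeff_le (β : ι →₀ ℕ) (c : (ι →₀ ℕ) → k) (γ : ι →₀ ℕ) :
    ‖hasseCoeff β c γ‖ ≤ ‖c (β + γ)‖ :=
  norm_natCast_mul_le _ _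

theorem norm_eval_le {A : ℝ} (hA : ∀ α, ‖c α‖ ≤ A) {x : ι → k} (hx : ‖x‖ ≤ 1) :
    ‖eval c x‖ ≤ A :=
  IsUltrametricDist.norm_tsum_le_of_forall_le_of_nonneg ((norm_nonneg _).trans (hA 0)) fun α =>
    (norm_mul_le _ _).trans <| (mul_le_of_le_one_right (norm_nonneg _)
      (norm_prod_pow_le_one hx α)).trans (hA α)

theorem tendsto_hasseCoeff (hc : Tendsto c cofinite (𝓝 0)) (β : ι →₀ ℕ) :
    Tendsto (hasseCoeff β c) cofinite (𝓝 0) :=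
  squeeze_zero_norm (norm_hasseCoeff_le β c)
    (tendsto_zero_iff_norm_tendsto_zero.1 (hc.comp (add_right_injective β).tendsto_cofinite))

theorem tendsto_derivCoeff (hc : Tendsto c cofinite (𝓝 0)) (β : ι →₀ ℕ) :
    Tendsto (derivCoeff β c) cofinite (𝓝 0) :=
  squeeze_zero_norm (fun _ => norm_natCast_mul_le _ _)
    (tendsto_zero_iff_norm_tendsto_zero.1 (hc.comp (add_right_injective β).tendsto_cofinite))

theorem norm_taylorTerm_le {A : ℝ} (hA : ∀ α, ‖c α‖ ≤ A) {x h : ι → k} (hx : ‖x‖ ≤ 1)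
    (hh : ‖h‖ ≤ 1) {n : ℕ} {β : ι →₀ ℕ} (hβ : n ≤ β.degree) :
    ‖(∏ i, h i ^ β i) * eval (hasseCoeff β c) x‖ ≤ A * ‖h‖ ^ n := by
  rw [norm_mul, mul_comm]
  exact mul_le_mul (norm_eval_le (fun γ => (norm_hasseCoeff_le β c γ).trans (hA _)) hx)
    ((norm_prod_pow_le h β).trans (pow_le_pow_of_le_one (norm_nonneg _) hh hβ))
    (norm_nonneg _) ((norm_nonneg _).trans (hA 0))

variable [CompleteSpace k]

theorem summable_eval (hc : Tendsto c cofinite (𝓝 0)) {x : ι → k} (hx : ‖x‖ ≤ 1) :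
    Summable fun α => c α * ∏ i, x i ^ α i :=
  NonarchimedeanAddGroup.summable_of_tendsto_cofinite_zero <| squeeze_zero_norm
    (fun α => (norm_mul_le _ _).trans (mul_le_of_le_one_right (norm_nonneg _)
      (norm_prod_pow_le_one hx α)))
    (tendsto_zero_iff_norm_tendsto_zero.1 hc)

theorem hasSum_taylor (hc : Tendsto c cofinite (𝓝 0)) {x h : ι → k} (hx : ‖x‖ ≤ 1)
    (hh : ‖h‖ ≤ 1) :
    HasSum (fun β => (∏ i, h i ^ β i) * eval (hasseCoeff β c) x) (eval c (x + h)) := by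
  classical
  set W : (ι →₀ ℕ) × (ι →₀ ℕ) → k := fun q =>
    (∏ i, h i ^ q.1 i) * (hasseCoeff q.1 c q.2 * ∏ i, x i ^ q.2 i)
  have hfib : Tendsto (fun q : (ι →₀ ℕ) × (ι →₀ ℕ) => q.1 + q.2) cofinite cofinite :=
    Tendsto.cofinite_of_finite_preimage_singleton fun α =>
      (antidiagonal α).finite_toSet.subset fun q hq => mem_antidiagonal.2 hq
  have hW : Tendsto W cofinite (𝓝 0) := by
    refine squeeze_zero_norm (fun q => ?_) (tendsto_zero_iff_norm_tendsto_zero.1 (hc.comp hfib))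
    calc ‖W q‖ ≤ 1 * (‖hasseCoeff q.1 c q.2‖ * 1) := by
          simp only [W, norm_mul]
          gcongr
          exacts [norm_prod_pow_le_one hh _, norm_prod_pow_le_one hx _]
      _ ≤ ‖c (q.1 + q.2)‖ := by simpa using norm_hasseCoeff_le q.1 c q.2
  have hWsum : HasSum W (∑' q, W q) :=
    (NonarchimedeanAddGroup.summable_of_tendsto_cofinite_zero hW).hasSum
  have hmonomial : ∀ α, c α * ∏ i, (x + h) i ^ α i = ∑ q ∈ antidiagonal α, W q := by
    intro α
    simp only [Pi.add_apply, add_comm (x _), Finsupp.prod_add_pow_eq_sum_antidiagonal,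
      Finset.mul_sum]
    refine Finset.sum_congr rfl fun q hq => ?_
    obtain rfl := mem_antidiagonal.1 hq
    simp only [W, hasseCoeff, Nat.cast_prod, Finset.prod_mul_distrib]
    ring
  rw [eval, tsum_congr hmonomial, hWsum.sum_antidiagonal.tsum_eq]
  exact hWsum.prod_fiberwise fun β => (summable_eval (tendsto_hasseCoeff hc β) hx).hasSum.mul_left _

theorem norm_eval_add_le_of_hasse_eq_zero (hc : Tendsto c cofinite (𝓝 0)) {A : ℝ}
    (hA : ∀ α, ‖c α‖ ≤ A) {x h : ι → k} (hx : ‖x‖ ≤ 1) (hh : ‖h‖ ≤ 1) {n : ℕ}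
    (hvanish : ∀ β : ι →₀ ℕ, β.degree < n → eval (hasseCoeff β c) x = 0) :
    ‖eval c (x + h)‖ ≤ A * ‖h‖ ^ n := by
  have hA0 : 0 ≤ A := (norm_nonneg _).trans (hA 0)
  rw [← (hasSum_taylor hc hx hh).tsum_eq]
  refine IsUltrametricDist.norm_tsum_le_of_forall_le_of_nonneg (by positivity) fun β => ?_
  rcases lt_or_ge β.degree n with hβ | hβ
  · rw [hvanish β hβ, mul_zero, norm_zero]
    positivity
  · exact norm_taylorTerm_le hA hx hh hβ

end Ultrametric

section Derivatives

variable {k : Type*} [NontriviallyNormedField k] [IsUltrametricDist k] [CompleteSpace k]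

theorem hasFDerivAt_eval {ι : Type*} [Fintype ι] {c : (ι →₀ ℕ) → k}
    (hc : Tendsto c cofinite (𝓝 0)) {x : ι → k} (hx : ‖x‖ ≤ 1) :
    HasFDerivAt (eval c) (∑ i, eval (hasseCoeff (Finsupp.single i 1) c) x •
      (ContinuousLinearMap.proj i : (ι → k) →L[k] k)) x := by
  classical
  obtain ⟨A, hA⟩ : ∃ A, ∀ α, ‖c α‖ ≤ A := by
    obtain ⟨A, hA⟩ := (tendsto_zero_iff_norm_tendsto_zero.1 hc).bddAbove_range_of_cofinite
    exact ⟨A, fun α => hA ⟨α, rfl⟩⟩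
  rw [hasFDerivAt_iff_isLittleO_nhds_zero]
  refine (Asymptotics.IsBigO.of_bound A ?_).trans_isLittleO
    (Asymptotics.isLittleO_norm_pow_id one_lt_two)
  filter_upwards [Metric.closedBall_mem_nhds (0 : ι → k) one_pos] with v hv
  rw [mem_closedBall_zero_iff] at hv
  -- The Taylor terms of degree `≤ 1` are `eval c x` and the linear part; the rest is `O(‖v‖²)`.
  set S : Finset (ι →₀ ℕ) := insert 0 (Finset.univ.image fun i => Finsupp.single i 1)
  have hT := hasSum_taylor hc hx hv
  have hlinear : ∑ β ∈ S, (∏ i, v i ^ β i) * eval (hasseCoeff β c) x =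
      eval c x + ∑ i, eval (hasseCoeff (Finsupp.single i 1) c) x * v i := by
    rw [Finset.sum_insert (by simp), Finset.sum_image fun i _ j _ h =>
      Finsupp.single_left_injective one_ne_zero h]
    simp [Finsupp.single_apply, mul_comm]
  have hL : (∑ i, eval (hasseCoeff (Finsupp.single i 1) c) x •
      (ContinuousLinearMap.proj i : (ι → k) →L[k] k)) v =
      ∑ i, eval (hasseCoeff (Finsupp.single i 1) c) x * v i := by
    simp
  rw [← hT.tsum_eq, ← hT.summable.sum_add_tsum_compl (s := S), hlinear, hL, sub_sub,
    add_sub_cancel_left, norm_pow, norm_norm]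
  refine IsUltrametricDist.norm_tsum_le_of_forall_le_of_nonneg
    (mul_nonneg ((norm_nonneg _).trans (hA 0)) (by positivity)) fun β => ?_
  have hβ : 2 ≤ β.1.degree := by
    have hβS := β.2
    simp only [S, Finset.coe_insert, Finset.coe_image, Finset.coe_univ, Set.image_univ,
      Set.mem_compl_iff, Set.mem_insert_iff, Set.mem_range, not_or, not_exists] at hβS
    exact Finsupp.two_le_degree hβS.1 fun i h => hβS.2 i h.symm
  exact norm_taylorTerm_le hA hx hv hβ

variable {m : ℕ} {c : (Fin m →₀ ℕ) → k}

theorem pdir_eqOn (hc : Tendsto c cofinite (𝓝 0)) {f : (Fin m → k) → k}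
    (hf : Set.EqOn f (eval c) (Metric.closedBall 0 1)) (i : Fin m) :
    Set.EqOn (pdir i f) (eval (hasseCoeff (Finsupp.single i 1) c)) (Metric.closedBall 0 1) := by
  intro y hy
  have hfy : f =ᶠ[𝓝 y] eval c :=
    eventually_of_mem ((IsUltrametricDist.isOpen_closedBall 0 one_ne_zero).mem_nhds hy) hf
  rw [pdir, hfy.fderiv_eq, (hasFDerivAt_eval hc (mem_closedBall_zero_iff.1 hy)).fderiv]
  simp [Pi.single_apply]

theorem iterate_pdir_eqOn (hc : Tendsto c cofinite (𝓝 0)) {f : (Fin m → k) → k}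
    {β : Fin m →₀ ℕ} (hf : Set.EqOn f (eval (derivCoeff β c)) (Metric.closedBall 0 1))
    (i : Fin m) (n : ℕ) :
    Set.EqOn ((pdir i)^[n] f) (eval (derivCoeff (β + Finsupp.single i n) c))
      (Metric.closedBall 0 1) := by
  induction n with
  | zero => simpa using hf
  | succ n ih =>
    rw [Function.iterate_succ_apply', Finsupp.single_add, ← add_assoc,
      ← hasseCoeff_single_one_derivCoeff]
    exact pdir_eqOn (tendsto_derivCoeff hc _) ih i

theorem foldr_pdir_eqOn (hc : Tendsto c cofinite (𝓝 0)) (β : Fin m → ℕ) (l : List (Fin m)) :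
    Set.EqOn (l.foldr (fun i h => (pdir i)^[β i] h) (eval c))
      (eval (derivCoeff (l.map fun i => Finsupp.single i (β i)).sum c))
      (Metric.closedBall 0 1) := by
  induction l with
  | nil => simpa using Set.eqOn_refl _ _
  | cons a l ih =>
    rw [List.foldr_cons, List.map_cons, List.sum_cons, add_comm]
    exact iterate_pdir_eqOn hc ih a (β a)

theorem pmulti_eqOn (hc : Tendsto c cofinite (𝓝 0)) (β : Fin m → ℕ) :
    Set.EqOn (pmulti β (eval c)) (eval (derivCoeff (Finsupp.equivFunOnFinite.symm β) c))
      (Metric.closedBall 0 1) := by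
  have hβ : ((List.finRange m).map fun i => Finsupp.single i (β i)).sum =
      Finsupp.equivFunOnFinite.symm β := by
    rw [← Fin.sum_univ_def]
    ext j
    simp [Finsupp.single_apply]
  exact hβ ▸ foldr_pdir_eqOn hc β (List.finRange m)

end Derivatives

end MvSeries

/-- Let `k` be a non-archimedean local field of characteristic
`p > 0`, and let `g(x) = Σ_α c_α x^α` be a power series in `m` variables with
`A := Σ_α |c_α| < ∞`.  If all partial derivatives `∂^β g` with `|β| ≤ p - 1`
vanish at `x`, `‖x‖ ≤ 1`, then `|g(x+h) - g(x)| ≤ A ‖h‖^p` for `‖h‖ ≤ 1`. -/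
theorem stmt3 {k : Type*} [NontriviallyNormedField k] [IsUltrametricDist k]
    [LocallyCompactSpace k] {p : ℕ} [CharP k p] (hp : 0 < p)
    {m : ℕ} (c : (Fin m →₀ ℕ) → k)
    (hc : Summable fun α => ‖c α‖)
    (g : (Fin m → k) → k)
    (hg : ∀ x : Fin m → k, g x = ∑' α : Fin m →₀ ℕ, c α * ∏ i, x i ^ α i)
    (A : ℝ) (hA : A = ∑' α : Fin m →₀ ℕ, ‖c α‖)
    (x h : Fin m → k) (hx : ‖x‖ ≤ 1) (hh : ‖h‖ ≤ 1)
    (hD : ∀ β : Fin m → ℕ, (∑ i, β i) ≤ p - 1 → pmulti β g x = 0) :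
    ‖g (x + h) - g x‖ ≤ A * ‖h‖ ^ p := by
  have : ProperSpace k := .of_nontriviallyNormedField_of_weaklyLocallyCompactSpace k
  have hp' : p.Prime := (CharP.char_is_prime_or_zero k p).resolve_right hp.ne'
  obtain rfl : g = MvSeries.eval c := funext hg
  have hc0 : Tendsto c cofinite (𝓝 0) :=
    tendsto_zero_iff_norm_tendsto_zero.2 hc.tendsto_cofinite_zero
  have hcA : ∀ α, ‖c α‖ ≤ A := fun α => hA ▸ hc.le_tsum α fun _ _ => norm_nonneg _
  have hvanish : ∀ β : Fin m →₀ ℕ, β.degree < p →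
      MvSeries.eval (MvSeries.hasseCoeff β c) x = 0 := by
    intro β hβ
    have hβx := hD β (by rw [← Finsupp.degree_eq_sum]; omega)
    rw [MvSeries.pmulti_eqOn hc0 β (mem_closedBall_zero_iff.2 hx),
      Finsupp.equivFunOnFinite_symm_coe, MvSeries.eval_derivCoeff] at hβx
    exact (mul_eq_zero.1 hβx).resolve_left (natCast_prod_factorial_ne_zero hp' hβ)
  rw [show MvSeries.eval c x = 0 by simpa using hvanish 0 hp, sub_zero]
  exact MvSeries.norm_eval_add_le_of_hasse_eq_zero hc0 hcA hx hh hvanish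
end

section
/- Let k be a non-archimedean local field, V a finite-dimensional k-vector space with a non-archimedean norm, and W ⊆ V a subspace (with the restricted norm). Suppose the inequality H2 holds for V, i.e., for every polynomial function g : V → k: if Z(g) = ∅ there exist C > 0, β ≥ 0 with |g(x)| ≥ C/‖x‖^β for all ‖x‖ ≥ 1, and if Z(g) ≠ ∅ there exist C > 0, α, β ≥ 0 with |g(x)| ≥ C·dist(x, Z(g))^α/‖x‖^β for all ‖x‖ ≥ 1. Then H2 also holds for W, i.e., the same two conclusions hold for every polynomial function f : W → k, with zero locus, distance and norm taken in W. -/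
open MvPolynomial

/-- A function `f : V → k` on a finite-dimensional `k`-vector space is a
polynomial function if, in the coordinates of some basis, it is given by a
multivariate polynomial. -/
def IsPolyFun (k : Type*) [Field k] {V : Type*} [AddCommGroup V] [Module k V]
    (f : V → k) : Prop :=
  ∃ (n : ℕ) (b : Module.Basis (Fin n) k V) (P : MvPolynomial (Fin n) k),
    ∀ v : V, f v = eval (fun i => b.repr v i) P

/-- The Hörmander inequality H2 holds on the normed `k`-vector space `V`:
for every polynomial function `g : V → k`, if `Z(g) = ∅` then
`|g(x)| ≥ C/‖x‖^β` for `‖x‖ ≥ 1`, and if `Z(g) ≠ ∅` then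
`|g(x)| ≥ C · dist(x, Z(g))^α / ‖x‖^β` for `‖x‖ ≥ 1`. -/
def H2Holds (k : Type*) [NontriviallyNormedField k] (V : Type*)
    [NormedAddCommGroup V] [NormedSpace k V] : Prop :=
  ∀ g : V → k, IsPolyFun k g →
    ({x : V | g x = 0} = ∅ →
      ∃ C > (0 : ℝ), ∃ β : ℝ, 0 ≤ β ∧
        ∀ x : V, 1 ≤ ‖x‖ → C / ‖x‖ ^ β ≤ ‖g x‖) ∧
    ({x : V | g x = 0}.Nonempty →
      ∃ C > (0 : ℝ), ∃ α β : ℝ, 0 ≤ α ∧ 0 ≤ β ∧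
        ∀ x : V, 1 ≤ ‖x‖ →
          C * Metric.infDist x {y : V | g y = 0} ^ α / ‖x‖ ^ β ≤ ‖g x‖)

/-!
A complement of `W` gives a continuous linear projection `π : V → W` that is the identity on `W`.
If `f` is a polynomial function on `W`, then `f ∘ π` is one on `V`, with zero locus `π⁻¹ Z(f)`
meeting `W` in `Z(f)`. Since `π` is `K`-Lipschitz, `dist(w, Z(f)) ≤ K · dist(w, π⁻¹ Z(f))` for
`w ∈ W`, so the H2 bounds for `f ∘ π` on `V` restrict to H2 bounds for `f` on `W`, with `C`
replaced by `C / K^α`.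
-/

open Metric NNReal

theorem IsPolyFun.comp_linearMap {k V W : Type*} [Field k] [AddCommGroup V] [Module k V]
    [FiniteDimensional k V] [AddCommGroup W] [Module k W] {f : W → k} (hf : IsPolyFun k f)
    (π : V →ₗ[k] W) : IsPolyFun k (f ∘ π) := by
  obtain ⟨n, b, P, hP⟩ := hf
  let c := Module.finBasis k V
  refine ⟨_, c, bind₁ (fun i => ∑ j, C (b.repr (π (c j)) i) * X j) P, fun v => ?_⟩
  have hcoord : ∀ i, b.repr (π v) i = ∑ j, c.repr v j * b.repr (π (c j)) i := by
    intro i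
    conv_lhs => rw [← c.sum_repr v]
    simp only [map_sum, map_smul, Finsupp.finsetSum_apply, Finsupp.smul_apply, smul_eq_mul]
  rw [Function.comp_apply, hP]
  refine (congrArg (fun x => eval x P) (funext fun i => ?_)).trans
    (eval₂Hom_bind₁ (RingHom.id k) _ _ P).symm
  simp [hcoord, mul_comm]

theorem LipschitzWith.infDist_le_mul_infDist_preimage {α β : Type*} [PseudoMetricSpace α]
    [PseudoMetricSpace β] {π : α → β} {K : ℝ≥0} (hπ : LipschitzWith K π) {s : Set β}
    (hs : (π ⁻¹' s).Nonempty) (x : α) : infDist (π x) s ≤ K * infDist x (π ⁻¹' s) := by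
  have : Nonempty (π ⁻¹' s) := hs.to_subtype
  rw [infDist_eq_iInf (s := π ⁻¹' s), Real.mul_iInf_of_nonneg K.coe_nonneg]
  exact le_ciInf fun y => (infDist_le_dist_of_mem (x := π x) y.2).trans (hπ.dist_le_mul x y)

theorem H2Holds.of_leftInverse {k V W : Type*} [NontriviallyNormedField k]
    [NormedAddCommGroup V] [NormedSpace k V] [FiniteDimensional k V]
    [NormedAddCommGroup W] [NormedSpace k W] (h : H2Holds k V) (π : V →L[k] W)
    (ι : W →ₗᵢ[k] V) (hπι : Function.LeftInverse π ι) : H2Holds k W := by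
  intro f hf
  obtain ⟨hEmpty, hNonempty⟩ := h (f ∘ π) (hf.comp_linearMap π.toLinearMap)
  have hfι : ∀ w, f (π (ι w)) = f w := fun w => congrArg f (hπι w)
  constructor
  · intro hZ
    obtain ⟨C, hC, β, hβ, hbound⟩ := hEmpty <| by
      change π ⁻¹' {y | f y = 0} = ∅
      rw [hZ, Set.preimage_empty]
    refine ⟨C, hC, β, hβ, fun w hw => ?_⟩
    simpa [hfι] using hbound (ι w) (by simpa using hw)
  · rintro ⟨z, hz⟩
    obtain ⟨C, hC, α, β, hα, hβ, hbound⟩ := hNonempty ⟨ι z, by simpa [hfι] using hz⟩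
    obtain ⟨K, hK, hπK⟩ : ∃ K : ℝ≥0, 0 < K ∧ LipschitzWith K π :=
      ⟨‖π‖₊ + 1, by positivity, π.lipschitz.weaken (by simp)⟩
    refine ⟨C / K ^ α, by positivity, α, β, hα, hβ, fun w hw => ?_⟩
    have hdist : infDist w {y | f y = 0} ≤ K * infDist (ι w) {y | (f ∘ π) y = 0} := by
      have := hπK.infDist_le_mul_infDist_preimage (s := {y | f y = 0})
        ⟨ι z, by simpa [hfι] using hz⟩ (ι w)
      rwa [hπι w] at this
    have hpow : infDist w {y | f y = 0} ^ α ≤ K ^ α * infDist (ι w) {y | (f ∘ π) y = 0} ^ α := by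
      rw [← Real.mul_rpow K.coe_nonneg infDist_nonneg]
      exact Real.rpow_le_rpow infDist_nonneg hdist hα
    calc C / K ^ α * infDist w {y | f y = 0} ^ α / ‖w‖ ^ β
        ≤ C / K ^ α * (K ^ α * infDist (ι w) {y | (f ∘ π) y = 0} ^ α) / ‖w‖ ^ β := by gcongr
      _ = C * infDist (ι w) {y | (f ∘ π) y = 0} ^ α / ‖ι w‖ ^ β := by
        rw [ι.norm_map]
        field_simp
      _ ≤ ‖f w‖ := by simpa [hfι] using hbound (ι w) (by simpa using hw)

theorem stmt8_general {k : Type*} [NontriviallyNormedField k]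
    [LocallyCompactSpace k]
    {V : Type*} [NormedAddCommGroup V] [NormedSpace k V] [FiniteDimensional k V]
    (W : Submodule k V) (h : H2Holds k V) : H2Holds k W := by
  have : ProperSpace k := .of_locallyCompactSpace k
  obtain ⟨W', hW'⟩ := W.exists_isCompl
  exact h.of_leftInverse (W.projectionOnto W' hW').toContinuousLinearMap W.subtypeₗᵢ
    (W.projectionOnto_apply_left hW')

/-- If the Hörmander inequality H2 holds for a
finite-dimensional non-archimedean normed `k`-vector space `V`, then it also
holds for every subspace `W ⊆ V` with the restricted norm. -/
theorem stmt8 {k : Type*} [NontriviallyNormedField k] [IsUltrametricDist k]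
    [LocallyCompactSpace k]
    {V : Type*} [NormedAddCommGroup V] [NormedSpace k V] [FiniteDimensional k V]
    [IsUltrametricDist V]
    (W : Submodule k V) (h : H2Holds k V) : H2Holds k W :=
  stmt8_general W h
end

section
/- Let D be a division ring equipped with a multiplicative non-archimedean absolute value ‖·‖ (so ‖xy‖ = ‖x‖·‖y‖, ‖x + y‖ ≤ max(‖x‖, ‖y‖), and ‖x‖ = 0 iff x = 0). Let S ⊆ D be a set containing a nonzero element, and let S* ⊆ D be any set with S* \ {0} = {y⁻¹ : y ∈ S, y ≠ 0}. Then there exists a constant C > 0 such that dist(x⁻¹, S*) ≥ C · dist(x, S) / ‖x‖² for all x ∈ D with ‖x‖ ≥ 1. -/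
/-!
Since `‖x⁻¹ - y⁻¹‖ = ‖x - y‖ / (‖x‖ ‖y‖)`, a point `y⁻¹` of `S*` with `‖y‖ ≤ ‖x‖` lies at distance
at least `‖x - y‖ / ‖x‖²` from `x⁻¹`, while for `‖y‖ > ‖x‖` the ultrametric inequality forces
`‖x - y‖ = ‖y‖`, so `y⁻¹` (like `0`) lies at distance `‖x‖⁻¹`. Hence
`dist(x⁻¹, S*) ≥ min (dist(x, S) / ‖x‖²) ‖x‖⁻¹`. Fixing `y₀ ∈ S \ {0}` and `M = max 1 ‖y₀‖`, for
`‖x‖ ≥ 1` we have `dist(x, S) ≤ ‖x - y₀‖ ≤ M ‖x‖`, so both terms of the minimum are at least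
`dist(x, S) / (M ‖x‖²)`.
-/

open Metric

section UltrametricGroup

variable {E : Type*} [SeminormedAddCommGroup E] [IsUltrametricDist E]

lemma norm_sub_le_max_norm (x y : E) : ‖x - y‖ ≤ max ‖x‖ ‖y‖ := by
  simpa only [sub_eq_add_neg, norm_neg] using IsUltrametricDist.norm_add_le_max x (-y)

lemma norm_sub_eq_of_norm_lt {x y : E} (h : ‖x‖ < ‖y‖) : ‖x - y‖ = ‖y‖ := by
  have hne : ‖x‖ ≠ ‖-y‖ := by rw [norm_neg]; exact h.ne
  rw [sub_eq_add_neg, IsUltrametricDist.norm_add_eq_max_of_norm_ne_norm hne, norm_neg,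
    max_eq_right h.le]

lemma infDist_le_max_norm {S : Set E} {y : E} (hy : y ∈ S) (x : E) :
    infDist x S ≤ max ‖x‖ ‖y‖ :=
  (infDist_le_dist_of_mem hy).trans_eq (dist_eq_norm x y) |>.trans (norm_sub_le_max_norm x y)

end UltrametricGroup

section UltrametricDivisionRing

variable {D : Type*} [NormedDivisionRing D] [IsUltrametricDist D]

lemma min_le_dist_inv_inv {x y : D} (hx : x ≠ 0) (hy : y ≠ 0) :
    min (‖x - y‖ / ‖x‖ ^ 2) ‖x‖⁻¹ ≤ dist x⁻¹ y⁻¹ := by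
  have hxpos : 0 < ‖x‖ := norm_pos_iff.mpr hx
  have hypos : 0 < ‖y‖ := norm_pos_iff.mpr hy
  have hdist : dist x⁻¹ y⁻¹ = ‖x - y‖ / (‖x‖ * ‖y‖) := by
    rw [dist_eq_norm, inv_sub_inv' hx hy, norm_mul, norm_mul, norm_inv, norm_inv, norm_sub_rev]
    field_simp
  rw [hdist]
  rcases le_or_gt ‖y‖ ‖x‖ with hyx | hxy
  · refine min_le_of_left_le (div_le_div_of_nonneg_left (norm_nonneg _) (by positivity) ?_)
    rw [sq]
    gcongr
  · refine min_le_of_right_le (le_of_eq ?_)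
    rw [norm_sub_eq_of_norm_lt hxy]
    field_simp

lemma min_le_infDist_inv {S Sstar : Set D} (hSstar : Sstar \ {0} ⊆ (·⁻¹) '' (S \ {0}))
    (hne : Sstar.Nonempty) {x : D} (hx : x ≠ 0) :
    min (infDist x S / ‖x‖ ^ 2) ‖x‖⁻¹ ≤ infDist x⁻¹ Sstar := by
  refine (le_infDist hne).mpr fun z hz => ?_
  rcases eq_or_ne z 0 with rfl | hz0
  · rw [dist_zero_right, norm_inv]
    exact min_le_right _ _
  · obtain ⟨y, ⟨hyS, hy0⟩, rfl⟩ := hSstar ⟨hz, hz0⟩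
    refine le_trans ?_ (min_le_dist_inv_inv hx hy0)
    gcongr
    exact (infDist_le_dist_of_mem hyS).trans_eq (dist_eq_norm x y)

end UltrametricDivisionRing

/-- Let `D` be a division ring with a multiplicative
non-archimedean absolute value.  Let `S ⊆ D` contain a nonzero element and let
`S*` satisfy `S* \ {0} = {y⁻¹ : y ∈ S, y ≠ 0}`.  Then there is `C > 0` with
`dist(x⁻¹, S*) ≥ C · dist(x, S) / ‖x‖²` for all `‖x‖ ≥ 1`. -/
theorem stmt9 {D : Type*} [NormedDivisionRing D] [IsUltrametricDist D]
    (S Sstar : Set D) (hS : ∃ y ∈ S, y ≠ 0)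
    (hSstar : Sstar \ {0} = (fun y : D => y⁻¹) '' (S \ {0})) :
    ∃ C > (0 : ℝ), ∀ x : D, 1 ≤ ‖x‖ →
      C * Metric.infDist x S / ‖x‖ ^ 2 ≤ Metric.infDist x⁻¹ Sstar := by
  obtain ⟨y₀, hy₀S, hy₀⟩ := hS
  have hne : Sstar.Nonempty :=
    ⟨y₀⁻¹, (hSstar.symm ▸ Set.mem_image_of_mem _ ⟨hy₀S, hy₀⟩ : y₀⁻¹ ∈ Sstar \ {0}).1⟩
  set M := max 1 ‖y₀‖
  have hM : 1 ≤ M := le_max_left _ _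
  refine ⟨M⁻¹, by positivity, fun x hx => ?_⟩
  have hx0 : x ≠ 0 := norm_pos_iff.mp (by linarith)
  have hdM : infDist x S ≤ M * ‖x‖ :=
    (infDist_le_max_norm hy₀S x).trans (max_le (by nlinarith) (by nlinarith [le_max_right 1 ‖y₀‖]))
  refine le_trans (le_min ?_ ?_) (min_le_infDist_inv hSstar.le hne hx0)
  · gcongr
    exact mul_le_of_le_one_left infDist_nonneg (inv_le_one_of_one_le₀ hM)
  · calc M⁻¹ * infDist x S / ‖x‖ ^ 2 ≤ M⁻¹ * (M * ‖x‖) / ‖x‖ ^ 2 := by gcongr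
      _ = ‖x‖⁻¹ := by field_simp
end

section
/- Let k be a local field, V a finite-dimensional normed k-vector space, and f = (f₁,…,f_r) : V → k^r a polynomial map; let d ≥ 1 be the maximum of the degrees of the components f_i and put ‖f(x) − f(y)‖ := max_i |f_i(x) − f_i(y)|. Then there exists a constant C > 0 such that ‖f(x) − f(y)‖ ≤ C · ‖x‖^{d−1} · max_{0 ≤ s ≤ d} ‖x − y‖^s for all x, y ∈ V with ‖x‖ ≥ 1. -/
/-!
A monomial of degree `m` is a product of `m` coordinates, so telescoping bounds its increment by
`m B^(m-1) ε`, where `B` bounds the coordinates of `x` and `y` and `ε` those of `x - y`.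
Over a complete field the coordinate functionals are continuous, so one may take
`B ≍ ‖x‖ + ‖x - y‖` and `ε ≍ ‖x - y‖`; for `‖x‖ ≥ 1` and `t = ‖x - y‖` finally
`(‖x‖ + t)^(d-1) t ≤ 2^(d-1) ‖x‖^(d-1) max(1, t)^d`, and `max(1, t)^d` is one of the `t^s`.
-/

open MvPolynomial

section MultisetProd

variable {ι R : Type*} [SeminormedCommRing R] [NormOneClass R] {B ε : ℝ}

theorem Multiset.norm_prod_map_le_pow_card {v : ι → R} (hv : ∀ j, ‖v j‖ ≤ B) (s : Multiset ι) :
    ‖(s.map v).prod‖ ≤ B ^ Multiset.card s := by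
  induction s using Multiset.induction_on with
  | empty => simp
  | cons a s ih =>
    rw [Multiset.map_cons, Multiset.prod_cons, Multiset.card_cons, pow_succ']
    exact (norm_mul_le _ _).trans
      (mul_le_mul (hv a) ih (norm_nonneg _) ((norm_nonneg _).trans (hv a)))

theorem Multiset.norm_prod_map_sub_prod_map_le {u v : ι → R} (hu : ∀ j, ‖u j‖ ≤ B)
    (hv : ∀ j, ‖v j‖ ≤ B) (huv : ∀ j, ‖u j - v j‖ ≤ ε) (s : Multiset ι) :
    ‖(s.map u).prod - (s.map v).prod‖ ≤
      Multiset.card s * B ^ (Multiset.card s - 1) * ε := by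
  induction s using Multiset.induction_on with
  | empty => simp
  | cons a s ih =>
    set P := (s.map u).prod
    set Q := (s.map v).prod
    have hB : 0 ≤ B := (norm_nonneg _).trans (hu a)
    have hQ : ‖Q‖ ≤ B ^ Multiset.card s := Multiset.norm_prod_map_le_pow_card hv s
    have hB_mul : B * (Multiset.card s * B ^ (Multiset.card s - 1)) =
        Multiset.card s * B ^ Multiset.card s := by
      rcases Nat.eq_zero_or_pos (Multiset.card s) with h | h
      · simp [h]
      · rw [mul_left_comm, mul_comm B, pow_sub_one_mul h.ne']
    simp only [Multiset.map_cons, Multiset.prod_cons, Multiset.card_cons, Nat.add_sub_cancel,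
      Nat.cast_succ]
    calc ‖u a * P - v a * Q‖ = ‖u a * (P - Q) + (u a - v a) * Q‖ := by ring_nf
      _ ≤ ‖u a‖ * ‖P - Q‖ + ‖u a - v a‖ * ‖Q‖ :=
          (norm_add_le _ _).trans (add_le_add (norm_mul_le _ _) (norm_mul_le _ _))
      _ ≤ B * (Multiset.card s * B ^ (Multiset.card s - 1) * ε) + ε * B ^ Multiset.card s :=
          add_le_add (mul_le_mul (hu a) ih (norm_nonneg _) hB)
            (mul_le_mul (huv a) hQ (norm_nonneg _) ((norm_nonneg _).trans (huv a)))
      _ = (Multiset.card s + 1) * B ^ Multiset.card s * ε := by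
          rw [← mul_assoc, hB_mul]; ring

end MultisetProd

theorem MvPolynomial.eval_eq_sum_prod_toMultiset {σ R : Type*} [CommSemiring R] (u : σ → R)
    (p : MvPolynomial σ R) :
    eval u p = ∑ α ∈ p.support, coeff α p * (α.toMultiset.map u).prod := by
  refine (eval_eq u p).trans (Finset.sum_congr rfl fun α _ => ?_)
  rw [Finsupp.toMultiset_map, Finsupp.prod_toMultiset,
    Finsupp.prod_mapDomain_index (fun _ => pow_zero _) (fun _ _ _ => pow_add _ _ _)]
  rfl

theorem MvPolynomial.norm_eval_sub_eval_le {σ R : Type*} [SeminormedCommRing R] [NormOneClass R]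
    {p : MvPolynomial σ R} {d : ℕ} (hp : p.totalDegree ≤ d) {u v : σ → R} {B ε : ℝ}
    (hB : 1 ≤ B) (hε : 0 ≤ ε) (hu : ∀ j, ‖u j‖ ≤ B) (hv : ∀ j, ‖v j‖ ≤ B)
    (huv : ∀ j, ‖u j - v j‖ ≤ ε) :
    ‖eval u p - eval v p‖ ≤ (∑ α ∈ p.support, ‖coeff α p‖) * (d * B ^ (d - 1) * ε) := by
  have hmonomial : ∀ α ∈ p.support,
      ‖(α.toMultiset.map u).prod - (α.toMultiset.map v).prod‖ ≤ d * B ^ (d - 1) * ε := by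
    intro α hα
    have hcard : Multiset.card α.toMultiset ≤ d :=
      (Finsupp.card_toMultiset α).trans_le ((le_totalDegree hα).trans hp)
    refine (Multiset.norm_prod_map_sub_prod_map_le hu hv huv _).trans ?_
    gcongr
  rw [eval_eq_sum_prod_toMultiset, eval_eq_sum_prod_toMultiset, ← Finset.sum_sub_distrib,
    Finset.sum_mul]
  refine (norm_sum_le _ _).trans (Finset.sum_le_sum fun α hα => ?_)
  rw [← mul_sub]
  exact (norm_mul_le _ _).trans (mul_le_mul_of_nonneg_left (hmonomial α hα) (norm_nonneg _))

theorem Module.Basis.exists_norm_repr_apply_le {𝕜 E ι : Type*} [NontriviallyNormedField 𝕜]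
    [CompleteSpace 𝕜] [NormedAddCommGroup E] [NormedSpace 𝕜 E] [Fintype ι]
    (b : Module.Basis ι 𝕜 E) : ∃ M, 1 ≤ M ∧ ∀ z j, ‖b.repr z j‖ ≤ M * ‖z‖ := by
  set L : E →L[𝕜] ι → 𝕜 := b.equivFunL.toContinuousLinearMap
  refine ⟨max 1 ‖L‖, le_max_left _ _, fun z j => ?_⟩
  calc ‖b.repr z j‖ = ‖L z j‖ := rfl
    _ ≤ ‖L z‖ := norm_le_pi_norm _ j
    _ ≤ ‖L‖ * ‖z‖ := L.le_opNorm z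
    _ ≤ max 1 ‖L‖ * ‖z‖ := by gcongr; exact le_max_right _ _

theorem max_one_pow_le_sup'_pow {t : ℝ} (d : ℕ) :
    max 1 t ^ d ≤ (Finset.range (d + 1)).sup' (by simp) (t ^ ·) := by
  rcases le_total t 1 with ht | ht
  · rw [max_eq_left ht, one_pow, ← pow_zero t]
    exact Finset.le_sup' (t ^ ·) (by simp)
  · rw [max_eq_right ht]
    exact Finset.le_sup' (t ^ ·) (by simp)

theorem add_pow_pred_mul_le_sup'_pow {a t : ℝ} {d : ℕ} (ha : 1 ≤ a) (ht : 0 ≤ t) (hd : d ≠ 0) :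
    (a + t) ^ (d - 1) * t ≤
      2 ^ (d - 1) * a ^ (d - 1) * (Finset.range (d + 1)).sup' (by simp) (t ^ ·) := by
  set T := max 1 t
  have hT : 1 ≤ T := le_max_left _ _
  have htT : t ≤ T := le_max_right _ _
  have hsum : a + t ≤ 2 * a * T := by nlinarith
  calc (a + t) ^ (d - 1) * t ≤ (2 * a * T) ^ (d - 1) * T := by gcongr
    _ = 2 ^ (d - 1) * a ^ (d - 1) * T ^ d := by rw [mul_pow, mul_pow, mul_assoc, pow_sub_one_mul hd]
    _ ≤ _ := by gcongr; exact max_one_pow_le_sup'_pow d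

/-- Let `k` be a local field, `V` a finite-dimensional normed
`k`-vector space and `f = (f₁,…,f_r) : V → k^r` a polynomial map (written in
the coordinates of a basis `b`), `d ≥ 1` the maximum of the degrees of the
components.  Then there is `C > 0` such that
`max_i |f_i(x) − f_i(y)| ≤ C ‖x‖^{d−1} max_{0 ≤ s ≤ d} ‖x − y‖^s`
for all `x, y` with `‖x‖ ≥ 1`. -/
theorem stmt10 {k : Type*} [NontriviallyNormedField k] [LocallyCompactSpace k]
    {V : Type*} [NormedAddCommGroup V] [NormedSpace k V]
    {n r d : ℕ} (hd : 1 ≤ d)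
    (b : Module.Basis (Fin n) k V) (P : Fin r → MvPolynomial (Fin n) k)
    (f : Fin r → V → k)
    (hf : ∀ (i : Fin r) (v : V), f i v = eval (fun j => b.repr v j) (P i))
    (hdeg : d = Finset.univ.sup fun i : Fin r => (P i).totalDegree) :
    ∃ C > (0 : ℝ), ∀ x y : V, 1 ≤ ‖x‖ → ∀ i : Fin r,
      ‖f i x - f i y‖ ≤
        C * ‖x‖ ^ (d - 1) *
          (Finset.range (d + 1)).sup' (by simp) (fun s => ‖x - y‖ ^ s) := by
  have : ProperSpace k := .of_nontriviallyNormedField_of_weaklyLocallyCompactSpace k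
  obtain ⟨M, hM, hrepr⟩ := b.exists_norm_repr_apply_le
  set K := ∑ i, ∑ α ∈ (P i).support, ‖coeff α (P i)‖
  refine ⟨(K + 1) * d * M ^ d * 2 ^ (d - 1), by positivity, fun x y hx i => ?_⟩
  have hK : ∑ α ∈ (P i).support, ‖coeff α (P i)‖ ≤ K + 1 := by
    have := Finset.single_le_sum (f := fun i => ∑ α ∈ (P i).support, ‖coeff α (P i)‖)
      (fun i _ => Finset.sum_nonneg fun α _ => norm_nonneg _) (Finset.mem_univ i)
    linarith
  have hPi : (P i).totalDegree ≤ d :=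
    hdeg ▸ Finset.le_sup (f := fun i => (P i).totalDegree) (Finset.mem_univ i)
  set t := ‖x - y‖
  have hy : ‖y‖ ≤ ‖x‖ + t := norm_le_norm_add_norm_sub x y
  have hB : 1 ≤ M * (‖x‖ + t) := by nlinarith [norm_nonneg (x - y)]
  have key := norm_eval_sub_eval_le (ε := M * t) hPi hB (by positivity)
    (fun j => (hrepr x j).trans (by gcongr; linarith [norm_nonneg (x - y)]))
    (fun j => (hrepr y j).trans (by gcongr))
    (fun j => by simpa only [map_sub, Finsupp.sub_apply] using hrepr (x - y) j)
  rw [← hf, ← hf] at key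
  calc ‖f i x - f i y‖
      ≤ (∑ α ∈ (P i).support, ‖coeff α (P i)‖) * (d * (M * (‖x‖ + t)) ^ (d - 1) * (M * t)) := key
    _ = (∑ α ∈ (P i).support, ‖coeff α (P i)‖) * d * M ^ d * ((‖x‖ + t) ^ (d - 1) * t) := by
        rw [mul_pow, ← pow_sub_one_mul (by omega : d ≠ 0) M]; ring
    _ ≤ (K + 1) * d * M ^ d * (2 ^ (d - 1) * ‖x‖ ^ (d - 1) *
          (Finset.range (d + 1)).sup' (by simp) (t ^ ·)) := by
        gcongr ?_ * _ * _ * ?_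
        exact add_pow_pred_mul_le_sup'_pow hx (norm_nonneg (x - y)) (Nat.one_le_iff_ne_zero.mp hd)
    _ = _ := by ring
end

section
/- Let R and S be locally compact, second countable metric spaces with Borel measures r and s respectively, and let π : R → S be a continuous surjective map that is a local homeomorphism and locally takes r to s: for each x ∈ R there are open sets M_x ∋ x and N_{π(x)} ∋ π(x) such that π restricts to a homeomorphism of M_x onto N_{π(x)} carrying the restriction of r to the restriction of s. Suppose there is a natural number d such that every fiber of π has cardinality at most d. Then for every Borel set E ⊆ R, π(E) is a Borel set in S and r(E) ≤ d·s(π(E)). Moreover, if f ≥ 0 is a continuous function on R and t is the Borel measure with dt = f·dr, then t(E) ≤ (sup_E f)·d·s(π(E)) for every Borel set E ⊆ R. -/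
/-!
Cover `R` by countably many charts and cut `E` into disjoint Borel pieces `Eₙ`, each inside one
chart. On a chart `π` is injective and open, so its inverse there is continuous; hence `π(Eₙ)` is
Borel and `r(Eₙ) = s(π(Eₙ))`. Distinct pieces meeting a fibre contribute distinct points of it, so
the sets `π(Eₙ)` overlap with multiplicity at most `d`, and integrating this multiplicity over `S`
gives `r(E) = ∑ s(π(Eₙ)) ≤ d · s(π(E))`. The weighted bound follows from
`t(E) = ∫_E f dr ≤ (sup_E f) · r(E)`.
-/

open MeasureTheory Set Function Topology

theorem measurableSet_image_of_injOn_of_isOpen_image {X Y : Type*} [TopologicalSpace X]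
    [MeasurableSpace X] [BorelSpace X] [TopologicalSpace Y] [MeasurableSpace Y]
    [OpensMeasurableSpace Y] {f : X → Y} {M K : Set X} (hM : IsOpen M)
    (hinj : InjOn f M) (hopen : ∀ V ⊆ M, IsOpen V → IsOpen (f '' V)) (hKM : K ⊆ M)
    (hK : MeasurableSet K) : MeasurableSet (f '' K) := by
  rcases K.eq_empty_or_nonempty with rfl | ⟨x, -⟩
  · simp
  have : Nonempty X := ⟨x⟩
  have hrestrict : IsOpenMap (M.domRestrict f) := fun U hU => by
    rw [domRestrict_eq, image_comp]
    exact hopen _ (Subtype.coe_image_subset M U) (hM.isOpenMap_subtype_val U hU)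
  have hinv : ContinuousOn (invFunOn f M) (f '' M) :=
    hrestrict.continuousOn_image_of_leftInvOn hinj.leftInvOn_invFunOn
  have himage : f '' K = Subtype.val '' ((f '' M).domRestrict (invFunOn f M) ⁻¹' K) := by
    rw [domRestrict_eq, preimage_comp, Subtype.image_preimage_coe, inter_comm,
      ← hinj.leftInvOn_invFunOn.image_inter', inter_eq_left.2 hKM]
  rw [himage]
  exact (hopen M subset_rfl hM).measurableSet.subtype_image
    ((continuousOn_iff_continuous_domRestrict.1 hinv).measurable hK)

theorem exists_measurable_partition_subordinate {X : Type*} [Nonempty X] [TopologicalSpace X]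
    [SecondCountableTopology X] [MeasurableSpace X] {U : X → Set X} (hU : ∀ x, U x ∈ 𝓝 x)
    (hUm : ∀ x, MeasurableSet (U x)) :
    ∃ (u : ℕ → X) (F : ℕ → Set X), (∀ n, MeasurableSet (F n)) ∧ Pairwise (Disjoint on F) ∧
      ⋃ n, F n = univ ∧ ∀ n, F n ⊆ U (u n) := by
  obtain ⟨t, htc, htU⟩ := TopologicalSpace.countable_cover_nhds hU
  obtain ⟨u, rfl⟩ := htc.exists_eq_range <| by
    obtain ⟨x, hx, -⟩ := mem_iUnion₂.1 (htU ▸ mem_univ (Classical.arbitrary X))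
    exact ⟨x, hx⟩
  rw [biUnion_range] at htU
  exact ⟨u, disjointed (U ∘ u), .disjointed fun n => hUm _, disjoint_disjointed _,
    by rw [iUnion_disjointed, ← htU]; rfl, disjointed_subset _⟩

theorem encard_setOf_mem_image_le {α β ι : Type*} {F : ι → Set α} (hF : Pairwise (Disjoint on F))
    (f : α → β) (y : β) : {i | y ∈ f '' F i}.encard ≤ (f ⁻¹' {y}).encard := by
  let g : {i | y ∈ f '' F i} → f ⁻¹' {y} := fun i => ⟨i.2.choose, i.2.choose_spec.2⟩
  refine ENat.card_le_card_of_injective (f := g) fun i j hij => Subtype.ext ?_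
  by_contra hne
  exact (hF hne).ne_of_mem i.2.choose_spec.1 j.2.choose_spec.1 (congrArg Subtype.val hij)

theorem tsum_measure_le_mul_measure_iUnion {α ι : Type*} [MeasurableSpace α] [Countable ι]
    (μ : Measure α) {A : ι → Set α} (hA : ∀ i, MeasurableSet (A i)) {d : ℕ∞}
    (hd : ∀ x, {i | x ∈ A i}.encard ≤ d) : ∑' i, μ (A i) ≤ d * μ (⋃ i, A i) := by
  have hcount : ∀ x, ∑' i, (A i).indicator 1 x = ({i | x ∈ A i}.encard : ENNReal) := fun x => by
    rw [← ENNReal.tsum_set_one, tsum_subtype _ fun _ => (1 : ENNReal)]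
    rfl
  have hbound : ∀ x, ({i | x ∈ A i}.encard : ENNReal) ≤ d * (⋃ i, A i).indicator 1 x := by
    intro x
    by_cases hx : x ∈ ⋃ i, A i
    · simpa [indicator_of_mem hx] using hd x
    · simp_all
  calc ∑' i, μ (A i) = ∫⁻ x, ∑' i, (A i).indicator 1 x ∂μ := by
        rw [lintegral_tsum fun i => (measurable_one.indicator (hA i)).aemeasurable]
        simp_rw [lintegral_indicator_one (hA _)]
    _ ≤ ∫⁻ x, d * (⋃ i, A i).indicator 1 x ∂μ :=
        lintegral_mono fun x => (hcount x).trans_le (hbound x)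
    _ = d * μ (⋃ i, A i) := by
        rw [lintegral_const_mul _ (measurable_one.indicator (.iUnion hA)),
          lintegral_indicator_one (.iUnion hA)]

section Charts

variable {R S : Type*} [TopologicalSpace R] [MeasurableSpace R] [BorelSpace R]
  [TopologicalSpace S] [MeasurableSpace S] [OpensMeasurableSpace S]

structure IsMeasureChart (π : R → S) (r : Measure R) (s : Measure S) (M : Set R) : Prop where
  isOpen : IsOpen M
  injOn : InjOn π M
  isOpen_image : ∀ V ⊆ M, IsOpen V → IsOpen (π '' V)
  measure_image : ∀ E ⊆ M, MeasurableSet E → r E = s (π '' E)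

variable {π : R → S} {r : Measure R} {s : Measure S}

theorem IsMeasureChart.measurableSet_image {M E : Set R} (hM : IsMeasureChart π r s M)
    (hEM : E ⊆ M) (hE : MeasurableSet E) : MeasurableSet (π '' E) :=
  measurableSet_image_of_injOn_of_isOpen_image hM.isOpen hM.injOn hM.isOpen_image hEM hE

variable [SecondCountableTopology R]

theorem measurableSet_image_of_forall_isMeasureChart
    (hchart : ∀ x, ∃ M, x ∈ M ∧ IsMeasureChart π r s M) {E : Set R} (hE : MeasurableSet E) :
    MeasurableSet (π '' E) := by
  choose M hmem hM using hchart
  obtain ⟨t, htc, htU⟩ :=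
    TopologicalSpace.countable_cover_nhds fun x => (hM x).isOpen.mem_nhds (hmem x)
  have hpieces : π '' E = ⋃ x ∈ t, π '' (E ∩ M x) := by
    rw [← image_iUnion₂, ← inter_iUnion₂, htU, inter_univ]
  rw [hpieces]
  exact .biUnion htc fun x _ =>
    (hM x).measurableSet_image inter_subset_right (hE.inter (hM x).isOpen.measurableSet)

theorem measure_le_mul_measure_image_of_forall_isMeasureChart
    (hchart : ∀ x, ∃ M, x ∈ M ∧ IsMeasureChart π r s M) {d : ℕ∞}
    (hfib : ∀ y, (π ⁻¹' {y}).encard ≤ d) {E : Set R} (hE : MeasurableSet E) :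
    r E ≤ d * s (π '' E) := by
  rcases isEmpty_or_nonempty R with _ | _
  · simp [eq_empty_of_isEmpty E]
  choose M hmem hM using hchart
  obtain ⟨u, F, hFm, hFdisj, hFU, hFM⟩ := exists_measurable_partition_subordinate
    (fun x => (hM x).isOpen.mem_nhds (hmem x)) fun x => (hM x).isOpen.measurableSet
  set G := fun n => E ∩ F n
  have hGm : ∀ n, MeasurableSet (G n) := fun n => hE.inter (hFm n)
  have hGM : ∀ n, G n ⊆ M (u n) := fun n => inter_subset_right.trans (hFM n)
  have hGdisj : Pairwise (Disjoint on G) := fun i j hij =>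
    (hFdisj hij).mono inter_subset_right inter_subset_right
  have hGU : ⋃ n, G n = E := by rw [← inter_iUnion, hFU, inter_univ]
  calc r E = ∑' n, s (π '' G n) := by
        rw [← hGU, measure_iUnion hGdisj hGm]
        exact tsum_congr fun n => (hM (u n)).measure_image _ (hGM n) (hGm n)
    _ ≤ d * s (⋃ n, π '' G n) :=
        tsum_measure_le_mul_measure_iUnion s
          (fun n => (hM (u n)).measurableSet_image (hGM n) (hGm n))
          fun y => (encard_setOf_mem_image_le hGdisj π y).trans (hfib y)
    _ = d * s (π '' E) := by rw [← image_iUnion, hGU]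

end Charts

theorem stmt17_general {R S : Type*}
    [MetricSpace R] [SecondCountableTopology R]
    [MetricSpace S]
    [MeasurableSpace R] [BorelSpace R] [MeasurableSpace S] [BorelSpace S]
    (r : Measure R) (s : Measure S)
    (π : R → S)
    (hloc : ∀ x : R, ∃ (M : Set R) (N : Set S), IsOpen M ∧ IsOpen N ∧ x ∈ M ∧
      Set.BijOn π M N ∧ (∀ V ⊆ M, IsOpen V → IsOpen (π '' V)) ∧
      (∀ E ⊆ M, MeasurableSet E → r E = s (π '' E)))
    (d : ℕ)
    (hfib : ∀ y : S, ∃ Fs : Finset R, (π ⁻¹' {y} : Set R) ⊆ ↑Fs ∧ Fs.card ≤ d) :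
    (∀ E : Set R, MeasurableSet E →
      MeasurableSet (π '' E) ∧ r E ≤ (d : ENNReal) * s (π '' E)) ∧
    (∀ f : R → ℝ, Continuous f → (∀ x, 0 ≤ f x) →
      ∀ E : Set R, MeasurableSet E →
        (r.withDensity fun x => ENNReal.ofReal (f x)) E ≤
          (⨆ x ∈ E, ENNReal.ofReal (f x)) * (d : ENNReal) * s (π '' E)) := by
  have hchart : ∀ x, ∃ M, x ∈ M ∧ IsMeasureChart π r s M := fun x => by
    obtain ⟨M, _, hM, -, hxM, hbij, hopen, hmeas⟩ := hloc x
    exact ⟨M, hxM, hM, hbij.injOn, hopen, hmeas⟩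
  have hfib_encard : ∀ y, (π ⁻¹' {y}).encard ≤ d := fun y => by
    obtain ⟨Fs, hsub, hcard⟩ := hfib y
    exact (encard_le_encard hsub).trans (by simpa using hcard)
  have hmain : ∀ E, MeasurableSet E → r E ≤ d * s (π '' E) := fun E hE => by
    simpa using measure_le_mul_measure_image_of_forall_isMeasureChart hchart hfib_encard hE
  refine ⟨fun E hE => ⟨measurableSet_image_of_forall_isMeasureChart hchart hE, hmain E hE⟩,
    fun f _ _ E hE => ?_⟩
  rw [withDensity_apply _ hE, mul_assoc]
  exact (setLIntegral_le_iSup_mul _ hE).trans (by gcongr; exact hmain E hE)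

/-- Let `R, S` be locally compact second countable metric
spaces with Borel measures `r, s`, and `π : R → S` a continuous surjective
local homeomorphism locally carrying `r` to `s`.  If every fiber of `π` has at
most `d` elements, then for every Borel `E ⊆ R`, `π(E)` is Borel and
`r(E) ≤ d · s(π(E))`; moreover for continuous `f ≥ 0` and `dt = f·dr` one has
`t(E) ≤ (sup_E f) · d · s(π(E))`. -/
theorem stmt17 {R S : Type*}
    [MetricSpace R] [LocallyCompactSpace R] [SecondCountableTopology R]
    [MetricSpace S] [LocallyCompactSpace S] [SecondCountableTopology S]
    [MeasurableSpace R] [BorelSpace R] [MeasurableSpace S] [BorelSpace S]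
    (r : Measure R) (s : Measure S)
    (π : R → S) (hcont : Continuous π) (hsurj : Function.Surjective π)
    (hloc : ∀ x : R, ∃ (M : Set R) (N : Set S), IsOpen M ∧ IsOpen N ∧ x ∈ M ∧
      Set.BijOn π M N ∧ (∀ V ⊆ M, IsOpen V → IsOpen (π '' V)) ∧
      (∀ E ⊆ M, MeasurableSet E → r E = s (π '' E)))
    (d : ℕ)
    (hfib : ∀ y : S, ∃ Fs : Finset R, (π ⁻¹' {y} : Set R) ⊆ ↑Fs ∧ Fs.card ≤ d) :
    (∀ E : Set R, MeasurableSet E →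
      MeasurableSet (π '' E) ∧ r E ≤ (d : ENNReal) * s (π '' E)) ∧
    (∀ f : R → ℝ, Continuous f → (∀ x, 0 ≤ f x) →
      ∀ E : Set R, MeasurableSet E →
        (r.withDensity fun x => ENNReal.ofReal (f x)) E ≤
          (⨆ x ∈ E, ENNReal.ofReal (f x)) * (d : ENNReal) * s (π '' E)) :=
  stmt17_general r s π hloc d hfib
end

section
/- Let k be a local field of characteristic 0 and f : k^m → k a homogeneous polynomial of degree d ≥ 1 such that 0 is the only singular point of its zero locus, i.e., for every x ≠ 0 with f(x) = 0 one has ∇f(x) ≠ 0. Then for every compact set W ⊆ k \ {0}, the infimum of ‖∇f(x)‖ over all c ∈ W and all x with f(x) = c and ‖x‖ ≥ 1 is strictly positive. -/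
open MvPolynomial

lemma auxSum {m : ℕ} (d : Fin m →₀ ℕ) : (∑ i, d i) = d.degree := by
  rw [Finsupp.degree]
  exact (Finset.sum_subset (Finset.subset_univ _)
    (fun i _ hi => Finsupp.notMem_support_iff.mp hi)).symm

lemma auxDegreeAdd {m : ℕ} (a b : Fin m →₀ ℕ) : (a + b).degree = a.degree + b.degree := by
  rw [← auxSum, ← auxSum, ← auxSum, ← Finset.sum_add_distrib]
  simp [Finsupp.add_apply]

lemma auxDegreeSingle {m : ℕ} (j : Fin m) : (Finsupp.single j 1).degree = 1 := by
  rw [← auxSum]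
  simp [Finsupp.single_apply]

lemma auxPderivHom {k : Type*} [CommRing k] {m n : ℕ} {f : MvPolynomial (Fin m) k}
    (hf : f.IsHomogeneous n) (j : Fin m) : (pderiv j f).IsHomogeneous (n - 1) := by
  have h : pderiv j f
      = ∑ d ∈ f.support, monomial (d - Finsupp.single j 1) (coeff d f * d j) := by
    conv_lhs => rw [f.as_sum]
    rw [map_sum]
    simp [pderiv_monomial]
  rw [h]
  apply IsHomogeneous.sum
  intro d hd
  rcases Nat.eq_zero_or_pos (d j) with h0 | h0
  · simp only [h0, Nat.cast_zero, mul_zero, map_zero]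
    exact isHomogeneous_zero _ _ _
  · have hdeg : d.degree = n := by
      by_contra h'
      exact (mem_support_iff.mp hd) (hf.coeff_eq_zero h')
    apply isHomogeneous_monomial
    have hle : Finsupp.single j 1 ≤ d := by
      rw [Finsupp.single_le_iff]; exact h0
    have hadd : (d - Finsupp.single j 1) + Finsupp.single j 1 = d :=
      tsub_add_cancel_of_le hle
    have := congrArg Finsupp.degree hadd
    rw [auxDegreeAdd, auxDegreeSingle] at this
    omega

lemma auxEulerMono {k : Type*} [CommRing k] {m : ℕ} (d : Fin m →₀ ℕ) (r : k) :
    ∑ j, X j * pderiv j (monomial d r) = C (d.degree : k) * monomial d r := by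
  have key : ∀ j, X j * pderiv j (monomial d r) = C (d j : k) * monomial d r := by
    intro j
    rw [pderiv_monomial, X, monomial_mul, one_mul]
    rcases Nat.eq_zero_or_pos (d j) with h0 | h0
    · simp [h0]
    · have hle : Finsupp.single j 1 ≤ d := by
        rw [Finsupp.single_le_iff]; exact h0
      have : Finsupp.single j 1 + (d - Finsupp.single j 1) = d := by
        rw [add_comm]; exact tsub_add_cancel_of_le hle
      rw [this, C_mul_monomial, mul_comm]
  simp_rw [key]
  rw [← Finset.sum_mul, ← map_sum, ← Nat.cast_sum, auxSum]

lemma auxEuler {k : Type*} [CommRing k] {m n : ℕ} {f : MvPolynomial (Fin m) k}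
    (hf : f.IsHomogeneous n) :
    ∑ j, X j * pderiv j f = C (n : k) * f := by
  have h : ∀ j : Fin m, X j * pderiv j f
      = ∑ d ∈ f.support, X j * pderiv j (monomial d (coeff d f)) := by
    intro j
    conv_lhs => rw [f.as_sum]
    rw [map_sum, Finset.mul_sum]
  simp_rw [h]
  rw [Finset.sum_comm]
  conv_rhs => rw [f.as_sum, Finset.mul_sum]
  refine Finset.sum_congr rfl fun d hd => ?_
  rw [auxEulerMono]
  have hdeg : d.degree = n := by
    by_contra h'
    exact (mem_support_iff.mp hd) (hf.coeff_eq_zero h')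
  rw [hdeg]

lemma auxEvalSmul {k : Type*} [CommRing k] {m n : ℕ} {f : MvPolynomial (Fin m) k}
    (hf : f.IsHomogeneous n) (c : k) (x : Fin m → k) :
    eval (c • x) f = c ^ n * eval x f := by
  rw [eval_eq', eval_eq', Finset.mul_sum]
  refine Finset.sum_congr rfl fun d hd => ?_
  have hdeg : d.degree = n := by
    by_contra h
    exact (mem_support_iff.mp hd) (hf.coeff_eq_zero h)
  have : ∏ i, (c • x) i ^ d i = c ^ n * ∏ i, x i ^ d i := by
    simp only [Pi.smul_apply, smul_eq_mul, mul_pow, Finset.prod_mul_distrib]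
    rw [Finset.prod_pow_eq_pow_sum, auxSum, hdeg]
  rw [this]; ring

set_option maxHeartbeats 1000000 in
/-- Let `k` be a local field of characteristic 0 and `f` a
homogeneous polynomial of degree `d ≥ 1` on `k^m` whose zero locus has `0` as
its only singular point.  Then for every compact `W ⊆ k \ {0}`, the infimum of
`‖∇f(x)‖ = max_i |∂f/∂x_i(x)|` over `c ∈ W`, `f(x) = c`, `‖x‖ ≥ 1`, is
strictly positive. -/
theorem stmt18 {k : Type*} [NontriviallyNormedField k] [LocallyCompactSpace k]
    [CharZero k]
    {m d : ℕ} (hd : 1 ≤ d) (f : MvPolynomial (Fin m) k) (hf : f.IsHomogeneous d)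
    (hsing : ∀ x : Fin m → k, x ≠ 0 → eval x f = 0 → ∃ i, eval x (pderiv i f) ≠ 0)
    (W : Set k) (hW : IsCompact W) (hW0 : (0 : k) ∉ W) :
    ∃ ε > (0 : ℝ), ∀ c ∈ W, ∀ x : Fin m → k, eval x f = c → 1 ≤ ‖x‖ →
      ∃ i, ε ≤ ‖eval x (pderiv i f)‖ := by
  by_cases hm : m = 0
  · subst hm
    refine ⟨1, one_pos, fun c hc x hfx hx1 => absurd hx1 ?_⟩
    rw [Subsingleton.elim x 0, norm_zero]
    norm_num
  have hm1 : 1 ≤ m := Nat.one_le_iff_ne_zero.mpr hm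
  have : ProperSpace k := ProperSpace.of_locallyCompactSpace k
  obtain ⟨t, ht⟩ := NormedField.exists_one_lt_norm k
  have ht0 : (0:ℝ) < ‖t‖ := lt_trans one_pos ht
  -- the compact annulus
  set K : Set (Fin m → k) := {y | 1 ≤ ‖y‖ ∧ ‖y‖ ≤ ‖t‖} with hK
  have hKc : IsCompact K := by
    have heq : K = Metric.closedBall 0 ‖t‖ ∩ {y | 1 ≤ ‖y‖} := by
      ext y
      simp [hK, mem_closedBall_zero_iff, and_comm]
    rw [heq]
    exact (isCompact_closedBall 0 ‖t‖).inter_right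
      (isClosed_le continuous_const continuous_norm)
  -- continuous function
  set g : (Fin m → k) → ℝ :=
    fun y => ‖eval y f‖ + ∑ j, ‖eval y (pderiv j f)‖ with hgdef
  have hg : Continuous g := by
    apply Continuous.add
    · exact (MvPolynomial.continuous_eval f).norm
    · exact continuous_finset_sum _ fun j _ => (MvPolynomial.continuous_eval _).norm
  have hKne : K.Nonempty := by
    refine ⟨fun _ => 1, ?_, ?_⟩
    · have : Nonempty (Fin m) := ⟨⟨0, hm1⟩⟩
      rw [pi_norm_const, norm_one]
    · have : Nonempty (Fin m) := ⟨⟨0, hm1⟩⟩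
      rw [pi_norm_const, norm_one]
      exact le_of_lt ht
  obtain ⟨δ, hδpos, hδy⟩ : ∃ δ : ℝ, 0 < δ ∧ ∀ y ∈ K,
      δ ≤ ‖eval y f‖ + ∑ j, ‖eval y (pderiv j f)‖ := by
    obtain ⟨z, hzK, hz⟩ := hKc.exists_isMinOn hKne hg.continuousOn
    refine ⟨g z, ?_, fun y hy => hz hy⟩
    have hz0 : z ≠ 0 := by
      intro h
      have h1 := hzK.1
      rw [h, norm_zero] at h1
      norm_num at h1
    by_cases hfz : eval z f = 0
    · obtain ⟨j, hj⟩ := hsing z hz0 hfz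
      have h1 : ‖eval z (pderiv j f)‖ ≤ ∑ i, ‖eval z (pderiv i f)‖ :=
        Finset.single_le_sum (f := fun i => ‖eval z (pderiv i f)‖)
          (fun i _ => norm_nonneg _) (Finset.mem_univ j)
      have h2 : 0 < ‖eval z (pderiv j f)‖ := norm_pos_iff.mpr hj
      have h3 := norm_nonneg (eval z f)
      have h4 : g z = ‖eval z f‖ + ∑ i, ‖eval z (pderiv i f)‖ := rfl
      rw [h4]
      linarith
    · have h2 : 0 < ‖eval z f‖ := norm_pos_iff.mpr hfz
      have h3 := Finset.sum_nonneg fun (j : Fin m) (_ : j ∈ Finset.univ) =>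
        norm_nonneg (eval z (pderiv j f))
      have h4 : g z = ‖eval z f‖ + ∑ i, ‖eval z (pderiv i f)‖ := rfl
      rw [h4]
      linarith
  have hdk : (0:ℝ) < ‖(d:k)‖ := by
    rw [norm_pos_iff]
    exact_mod_cast Nat.cast_ne_zero.mpr (by omega : d ≠ 0)
  set c₀ : ℝ := min (δ/2) (‖(d:k)‖ * (δ/2) / ‖t‖) with hc₀def
  have hc₀pos : 0 < c₀ := lt_min (by linarith) (by positivity)
  -- claim: on K the sum of gradient norms is at least c₀
  have claim : ∀ y ∈ K, c₀ ≤ ∑ j, ‖eval y (pderiv j f)‖ := by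
    intro y hy
    have hδyy := hδy y hy
    by_cases hcase : ‖eval y f‖ ≤ δ/2
    · refine le_trans (min_le_left _ _) ?_
      linarith
    · push_neg at hcase
      -- Euler identity at y
      have heuler : (d:k) * eval y f = ∑ j, y j * eval y (pderiv j f) := by
        have := congrArg (eval y) (auxEuler hf)
        simp only [map_sum, eval_mul, eval_X, eval_C] at this
        exact this.symm
      have hnorm : ‖(d:k)‖ * ‖eval y f‖ ≤ ‖t‖ * ∑ j, ‖eval y (pderiv j f)‖ := by
        calc ‖(d:k)‖ * ‖eval y f‖ = ‖(d:k) * eval y f‖ := (norm_mul _ _).symm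
          _ = ‖∑ j, y j * eval y (pderiv j f)‖ := by rw [heuler]
          _ ≤ ∑ j, ‖y j * eval y (pderiv j f)‖ := norm_sum_le _ _
          _ ≤ ∑ j, ‖t‖ * ‖eval y (pderiv j f)‖ := by
              refine Finset.sum_le_sum fun j _ => ?_
              rw [norm_mul]
              exact mul_le_mul_of_nonneg_right
                (le_trans (norm_le_pi_norm y j) hy.2) (norm_nonneg _)
          _ = ‖t‖ * ∑ j, ‖eval y (pderiv j f)‖ := (Finset.mul_sum _ _ _).symm
      refine le_trans (min_le_right _ _) ?_
      rw [div_le_iff₀ ht0]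
      calc ‖(d:k)‖ * (δ/2) ≤ ‖(d:k)‖ * ‖eval y f‖ :=
            mul_le_mul_of_nonneg_left (le_of_lt hcase) (norm_nonneg _)
        _ ≤ ‖t‖ * ∑ j, ‖eval y (pderiv j f)‖ := hnorm
        _ = (∑ j, ‖eval y (pderiv j f)‖) * ‖t‖ := mul_comm _ _
  -- from sum bound to single coordinate bound
  have claim2 : ∀ y ∈ K, ∃ j, c₀ / m ≤ ‖eval y (pderiv j f)‖ := by
    intro y hy
    by_contra hcon
    push_neg at hcon
    have : ∑ j, ‖eval y (pderiv j f)‖ < ∑ _j : Fin m, c₀ / m := by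
      apply Finset.sum_lt_sum_of_nonempty
      · exact Finset.univ_nonempty_iff.mpr ⟨⟨0, hm1⟩⟩
      · exact fun j _ => hcon j
    rw [Finset.sum_const, Finset.card_univ, Fintype.card_fin, nsmul_eq_mul] at this
    rw [mul_div_cancel₀ c₀ (by exact_mod_cast hm : (m:ℝ) ≠ 0)] at this
    exact absurd (claim y hy) (not_le.mpr this)
  refine ⟨c₀ / m, by positivity, fun c hc x hfx hx1 => ?_⟩
  -- scale x into K
  have hx0 : (0:ℝ) < ‖x‖ := lt_of_lt_of_le one_pos hx1
  obtain ⟨n, hn1, hn2⟩ := exists_mem_Ico_zpow hx0 ht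
  have hn0 : 0 ≤ n := by
    by_contra h
    push_neg at h
    have : n + 1 ≤ 0 := by omega
    have : ‖t‖ ^ (n+1) ≤ 1 := zpow_le_one_of_nonpos₀ (le_of_lt ht) this
    linarith [lt_of_le_of_lt hx1 hn2]
  lift n to ℕ using hn0 with N
  rw [zpow_natCast] at hn1
  have hn2' : ‖x‖ < ‖t‖ ^ (N + 1) := by
    rw [show ((N:ℤ)+1) = ((N+1 : ℕ) : ℤ) by push_cast; ring, zpow_natCast] at hn2
    exact hn2
  set u : k := t ^ N with hudef
  have hu_norm : ‖u‖ = ‖t‖ ^ N := norm_pow _ _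
  have hu1 : 1 ≤ ‖u‖ := by rw [hu_norm]; exact one_le_pow₀ (le_of_lt ht)
  have hu0 : u ≠ 0 := by
    intro h
    rw [h, norm_zero] at hu1
    linarith
  set y : Fin m → k := u⁻¹ • x with hydef
  have hyx : x = u • y := (smul_inv_smul₀ hu0 x).symm
  have hynorm : ‖y‖ = ‖x‖ / ‖u‖ := by
    rw [hydef, norm_smul, norm_inv]
    field_simp
  have hyK : y ∈ K := by
    constructor
    · rw [hynorm, hu_norm, le_div_iff₀ (by positivity), one_mul]
      exact hn1
    · rw [hynorm, hu_norm, div_le_iff₀ (by positivity)]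
      have hpow : ‖t‖ ^ (N+1) = ‖t‖ * ‖t‖ ^ N := by ring
      linarith
  obtain ⟨j, hj⟩ := claim2 y hyK
  refine ⟨j, ?_⟩
  have hscale : eval x (pderiv j f) = u ^ (d-1) * eval y (pderiv j f) := by
    rw [hyx]
    exact auxEvalSmul (auxPderivHom hf j) u y
  rw [hscale, norm_mul, norm_pow]
  calc c₀ / m ≤ ‖eval y (pderiv j f)‖ := hj
    _ = 1 * ‖eval y (pderiv j f)‖ := (one_mul _).symm
    _ ≤ ‖u‖ ^ (d-1) * ‖eval y (pderiv j f)‖ :=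
        mul_le_mul_of_nonneg_right (one_le_pow₀ hu1) (norm_nonneg _)
end
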